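/- Let q > 1 be real, β = 2q − 1, l > 0. With F_l and G_l the truncation functions (F_l(x) = 0 for x < 0, x^q for 0 ≤ x < l, q l^{q−1} x − (q−1) l^q for x ≥ l; G_l(x) = 0 for x < 0, x^β for 0 ≤ x < l, l^{q−1}(q l^{q−1} x − (q−1) l^q) for x ≥ l), we have (F_l(x))² ≥ x · G_l(x) for all x ∈ ℝ. -/
import Mathlib


/-- The truncation function `F_l` from the appendix. -/
noncomputable def Fl (q l : ℝ) (x : ℝ) : ℝ :=
  if x < 0 then 0 else if x < l then x ^ q else q * l ^ (q - 1) * x - (q - 1) * l ^ q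

/-- The truncation function `G_l` from the appendix, with `β = 2q - 1`. -/
noncomputable def Gl (q l : ℝ) (x : ℝ) : ℝ :=
  if x < 0 then 0 else if x < l then x ^ (2 * q - 1)
    else l ^ (q - 1) * (q * l ^ (q - 1) * x - (q - 1) * l ^ q)

theorem stmt_7 (q l : ℝ) (hq : 1 < q) (hl : 0 < l) (x : ℝ) :
    x * Gl q l x ≤ (Fl q l x) ^ 2 := by
  unfold Fl Gl
  rcases lt_or_ge x 0 with h0 | h0
  · simp [h0]
  rcases lt_or_ge x l with h1 | h1
  · simp only [not_lt.mpr h0, if_false, h1, if_true]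
    rcases eq_or_lt_of_le h0 with h0' | h0'
    · rw [← h0']
      rw [Real.zero_rpow (by linarith), Real.zero_rpow (by linarith)]
      norm_num
    · rw [← Real.rpow_natCast (x ^ q) 2, ← Real.rpow_mul h0, mul_comm x,
        ← Real.rpow_add_one h0'.ne' (2 * q - 1)]
      apply le_of_eq; congr 1; push_cast; ring
  · simp only [not_lt.mpr h0, if_false, not_lt.mpr h1, if_false]
    have hlq : l ^ (q - 1) * l = l ^ q := by
      rw [← Real.rpow_add_one hl.ne' (q - 1)]; ring_nf
    have hp : 0 < l ^ (q - 1) := Real.rpow_pos_of_pos hl _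
    have hA : l ^ (q - 1) * l ≤ q * l ^ (q - 1) * x - (q - 1) * (l ^ (q - 1) * l) := by
      nlinarith [mul_le_mul_of_nonneg_left h1 (le_of_lt (mul_pos (by linarith : (0:ℝ) < q) hp))]
    rw [← hlq]
    nlinarith [mul_nonneg (mul_nonneg (by linarith : (0:ℝ) ≤ q - 1) hp.le)
      (by linarith : (0:ℝ) ≤ x - l), mul_pos hp hl]
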